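/- Let G be a graph on [n] with n ≥ 2 and suppose T = [n] \ {v} for some vertex v. If for some graph H on [n] the ideal q̂ = P_T(H) lies in the poset Q_G, then the open interval (q̂, 1_{Q_G}) in Q_G is a meet-contractible poset, with meet witness P_∅(G): for every q in the interval, q + P_∅(G) lies in the interval and is the meet of q and P_∅(G). -/

import Mathlib

open MvPolynomial

section Defs

variable (K : Type*) [Field K] {V : Type*} [Fintype V] [DecidableEq V]

/-- The variable `x_i`. -/
noncomputable def xv (i : V) : MvPolynomial (Fin 2 × V) K := X (0, i)

/-- The variable `y_i`. -/
noncomputable def yv (i : V) : MvPolynomial (Fin 2 × V) K := X (1, i)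

/-- The binomial `x_i y_j - x_j y_i`. -/
noncomputable def binom (i j : V) : MvPolynomial (Fin 2 × V) K :=
  xv K i * yv K j - xv K j * yv K i

/-- The binomial edge ideal `J_G` of a simple graph `G`. -/
noncomputable def beIdeal (G : SimpleGraph V) : Ideal (MvPolynomial (Fin 2 × V) K) :=
  Ideal.span { f | ∃ i j, G.Adj i j ∧ f = binom K i j }

/-- The graph `G - T`: delete the vertices of `T` (kept as isolated vertices). -/
def delV (G : SimpleGraph V) (T : Finset V) : SimpleGraph V where
  Adj i j := G.Adj i j ∧ i ∉ T ∧ j ∉ T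
  symm := ⟨fun i j h => ⟨h.1.symm, h.2.2, h.2.1⟩⟩
  loopless := ⟨fun i h => G.loopless.irrefl i h.1⟩

/-- `c_G(T)`: the number of connected components of `G - T`. -/
noncomputable def cCount (G : SimpleGraph V) (T : Finset V) : ℕ :=
  Nat.card {c : (delV G T).ConnectedComponent //
    ∃ v, v ∉ T ∧ (delV G T).connectedComponentMk v = c}

/-- The prime ideal `P_T(G) = (x_i, y_i : i ∈ T) + J_{G̃₁} + ⋯ + J_{G̃_c}`,
where the `G̃ᵢ` are complete graphs on the components of `G - T`. -/
noncomputable def PTIdeal (G : SimpleGraph V) (T : Finset V) :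
    Ideal (MvPolynomial (Fin 2 × V) K) :=
  Ideal.span ({ f | ∃ i ∈ T, f = xv K i ∨ f = yv K i } ∪
    { f | ∃ i j, i ∉ T ∧ j ∉ T ∧ i ≠ j ∧ (delV G T).Reachable i j ∧ f = binom K i j })

/-- `T` has the cut point property for `G`. -/
def hasCutPointProperty (G : SimpleGraph V) (T : Finset V) : Prop :=
  ∀ i ∈ T, cCount G (T.erase i) < cCount G T

/-- The height of an ideal: the infimum of the heights of the primes containing it. -/
noncomputable def idealHeight {R : Type*} [CommRing R] (I : Ideal R) : ℕ∞ :=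
  ⨅ P : {P : PrimeSpectrum R // I ≤ P.asIdeal}, Order.height P.1

end Defs

section QG

variable (K : Type*) [Field K] {V : Type*} [Fintype V] [DecidableEq V]

/-- All finite (nonempty) sums of ideals taken from a set `A` of ideals. -/
def sumsOf {R : Type*} [CommRing R] (A : Set (Ideal R)) : Set (Ideal R) :=
  { I | ∃ F : Finset (Ideal R), F.Nonempty ∧ ↑F ⊆ A ∧ I = F.sum id }

/-- The ideals reachable in the construction of the poset `Q_G`: one starts with all sums of
minimal primes of `J_G`, and whenever a non-prime ideal `I` is discovered, corresponding to the
decomposition `I = q₁ ∩ ⋯ ∩ q_t ∩ (q₁ + P_∅(G)) ∩ ⋯ ∩ (q_t + P_∅(G))` (the `qᵢ` being the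
minimal primes of `I`), one adds all sums of subsets of these ideals, and recurses. -/
inductive QReach (G : SimpleGraph V) : Ideal (MvPolynomial (Fin 2 × V) K) → Prop
  | base (I : Ideal (MvPolynomial (Fin 2 × V) K))
      (h : I ∈ sumsOf ((beIdeal K G).minimalPrimes)) : QReach G I
  | step (I J : Ideal (MvPolynomial (Fin 2 × V) K)) (hI : QReach G I) (hnp : ¬ I.IsPrime)
      (hJ : J ∈ sumsOf (I.minimalPrimes ∪ ((· + PTIdeal K G ∅) '' I.minimalPrimes))) :
      QReach G J

/-- The poset `Q_G`: the prime ideals appearing in the above construction. -/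
def QG (G : SimpleGraph V) : Set (Ideal (MvPolynomial (Fin 2 × V) K)) :=
  { q | QReach K G q ∧ q.IsPrime }

end QG

section Aux

variable (K : Type*) [Field K] {V : Type*} [Fintype V] [DecidableEq V]

lemma binom_self (i : V) : binom K i i = 0 := sub_self _

lemma xv_mul_binom (i j k : V) :
    xv K k * binom K i j = xv K j * binom K i k + xv K i * binom K k j := by
  simp only [binom]; ring

lemma yv_mul_binom (i j k : V) :
    yv K k * binom K i j = yv K j * binom K i k + yv K i * binom K k j := by
  simp only [binom]; ring

/-- The "reachability graph" of `W` off `S`. -/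
def rg (W : SimpleGraph V) (S : Finset V) : SimpleGraph V where
  Adj i j := i ≠ j ∧ i ∉ S ∧ j ∉ S ∧ (delV W S).Reachable i j
  symm := ⟨fun i j ⟨h1, h2, h3, h4⟩ => ⟨h1.symm, h3, h2, h4.symm⟩⟩
  loopless := ⟨fun i h => h.1 rfl⟩

/-- The ideal generated by the variables in `S` together with the edge binomials of `W` off
`S`. -/
noncomputable def IC (W : SimpleGraph V) (S : Finset V) :
    Ideal (MvPolynomial (Fin 2 × V) K) :=
  Ideal.span ({ f | ∃ i ∈ S, f = xv K i ∨ f = yv K i } ∪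
    { f | ∃ i j, W.Adj i j ∧ i ∉ S ∧ j ∉ S ∧ f = binom K i j })

lemma xv_mem_IC {W : SimpleGraph V} {S : Finset V} {i : V} (hi : i ∈ S) :
    xv K i ∈ IC K W S :=
  Ideal.subset_span (Set.mem_union_left _ ⟨i, hi, Or.inl rfl⟩)

lemma yv_mem_IC {W : SimpleGraph V} {S : Finset V} {i : V} (hi : i ∈ S) :
    yv K i ∈ IC K W S :=
  Ideal.subset_span (Set.mem_union_left _ ⟨i, hi, Or.inr rfl⟩)

lemma binom_mem_IC {W : SimpleGraph V} {S : Finset V} {i j : V} (h : W.Adj i j)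
    (hi : i ∉ S) (hj : j ∉ S) : binom K i j ∈ IC K W S :=
  Ideal.subset_span (Set.mem_union_right _ ⟨i, j, h, hi, hj, rfl⟩)

/-- If one of the two vertices of a binomial has both its variables in an ideal, the binomial
is in the ideal. -/
lemma binom_mem_of_vars {p : Ideal (MvPolynomial (Fin 2 × V) K)} {i j : V}
    (hx : xv K i ∈ p) (hy : yv K i ∈ p) : binom K i j ∈ p := by
  have h1 : xv K i * yv K j ∈ p := p.mul_mem_right _ hx
  have h2 : xv K j * yv K i ∈ p := p.mul_mem_left _ hy
  exact sub_mem h1 h2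

/-- The ring map killing the variables in `S` and mapping both `x_i` and `y_i` to `x_i`
otherwise; it kills all binomials. -/
noncomputable def chiHom (S : Finset V) :
    MvPolynomial (Fin 2 × V) K →+* MvPolynomial (Fin 2 × V) K :=
  eval₂Hom C (fun p => if p.2 ∈ S then 0 else X (0, p.2))

lemma chiHom_binom (S : Finset V) (i j : V) : chiHom K S (binom K i j) = 0 := by
  simp only [binom, chiHom, map_sub, map_mul, xv, yv, eval₂Hom_X']
  ring

lemma IC_le_ker_chiHom (W : SimpleGraph V) (S : Finset V) :
    IC K W S ≤ RingHom.ker (chiHom K S) := by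
  rw [IC, Ideal.span_le]
  rintro f (⟨i, hi, rfl | rfl⟩ | ⟨i, j, _, _, _, rfl⟩)
  · simp [RingHom.mem_ker, chiHom, xv, hi]
  · simp [RingHom.mem_ker, chiHom, yv, hi]
  · simp [RingHom.mem_ker, chiHom_binom]

lemma xv_not_mem_IC {W : SimpleGraph V} {S : Finset V} {k : V} (hk : k ∉ S) :
    xv K k ∉ IC K W S := by
  intro h
  have := IC_le_ker_chiHom K W S h
  rw [RingHom.mem_ker] at this
  simp only [chiHom, xv, eval₂Hom_X', hk, if_false] at this
  exact MvPolynomial.X_ne_zero _ this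

lemma yv_not_mem_IC {W : SimpleGraph V} {S : Finset V} {k : V} (hk : k ∉ S) :
    yv K k ∉ IC K W S := by
  intro h
  have := IC_le_ker_chiHom K W S h
  rw [RingHom.mem_ker] at this
  simp only [chiHom, yv, eval₂Hom_X', hk, if_false] at this
  exact MvPolynomial.X_ne_zero _ this

/-- Walk lemma: binomials along reachability lie in a prime containing the edge binomials,
provided no pivot vertex has both of its variables in the prime. -/
lemma walk_binom_mem {p : Ideal (MvPolynomial (Fin 2 × V) K)} (hp : p.IsPrime)
    (D : SimpleGraph V)
    (hedge : ∀ i j, D.Adj i j → binom K i j ∈ p)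
    (hvar : ∀ l k, D.Adj l k → xv K k ∉ p ∨ yv K k ∉ p)
    {i j : V} (h : D.Reachable i j) : binom K i j ∈ p := by
  obtain ⟨w⟩ := h
  induction w with
  | nil => rw [binom_self]; exact zero_mem _
  | @cons a b c hab w ih =>
    have hbik : binom K a b ∈ p := hedge _ _ hab
    have hbkj : binom K b c ∈ p := ih
    have hxk : xv K b * binom K a c ∈ p := by
      rw [xv_mul_binom]
      exact add_mem (p.mul_mem_left _ hbik) (p.mul_mem_left _ hbkj)
    have hyk : yv K b * binom K a c ∈ p := by
      rw [yv_mul_binom]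
      exact add_mem (p.mul_mem_left _ hbik) (p.mul_mem_left _ hbkj)
    rcases hvar _ _ hab with hv | hv
    · rcases hp.mem_or_mem hxk with h' | h'
      · exact absurd h' hv
      · exact h'
    · rcases hp.mem_or_mem hyk with h' | h'
      · exact absurd h' hv
      · exact h'

end Aux
section PrimePT

variable (K : Type*) [Field K] {V : Type*} [Fintype V] [DecidableEq V]
variable (H : SimpleGraph V) (T : Finset V)

attribute [local instance] Classical.propDecidable

/-- The parametrization homomorphism `x_i ↦ A_{[i]} t_i`, `y_i ↦ B_{[i]} t_i` (and `0` on the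
variables of `T`). -/
noncomputable def psiHom :
    MvPolynomial (Fin 2 × V) K →+*
      MvPolynomial ((Fin 2 × (delV H T).ConnectedComponent) ⊕ V) K :=
  eval₂Hom C (fun p => if p.2 ∈ T then 0 else
    X (Sum.inl (p.1, (delV H T).connectedComponentMk p.2)) * X (Sum.inr p.2))

/-- The exponent vector of the image of a variable. -/
noncomputable def wFn (p : Fin 2 × V) :
    ((Fin 2 × (delV H T).ConnectedComponent) ⊕ V) →₀ ℕ :=
  Finsupp.single (Sum.inl (p.1, (delV H T).connectedComponentMk p.2)) 1 +
    Finsupp.single (Sum.inr p.2) 1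

/-- The exponent vector of the image of a monomial. -/
noncomputable def eMap (u : (Fin 2 × V) →₀ ℕ) :
    ((Fin 2 × (delV H T).ConnectedComponent) ⊕ V) →₀ ℕ :=
  u.sum fun p n => n • wFn H T p

/-- A monomial supported away from the variables of `T`. -/
def OffT (u : (Fin 2 × V) →₀ ℕ) : Prop := ∀ p ∈ u.support, p.2 ∉ T

lemma eMap_add (u v : (Fin 2 × V) →₀ ℕ) : eMap H T (u + v) = eMap H T u + eMap H T v :=
  Finsupp.sum_add_index' (fun p => zero_smul _ _) (fun p m n => add_smul _ _ _)

lemma eMap_single (p : Fin 2 × V) (n : ℕ) :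
    eMap H T (Finsupp.single p n) = n • wFn H T p :=
  Finsupp.sum_single_index (zero_smul _ _)

lemma eMap_apply_inr (u : (Fin 2 × V) →₀ ℕ) (i : V) :
    eMap H T u (Sum.inr i) = u (0, i) + u (1, i) := by
  induction u using Finsupp.induction_linear with
  | zero => simp [eMap]
  | add f g hf hg => simp [eMap_add, hf, hg]; ring
  | single p n =>
    obtain ⟨k, l⟩ := p
    rw [eMap_single]
    fin_cases k <;>
      simp [wFn, Finsupp.single_apply, Finsupp.single_apply_eq_zero, Prod.ext_iff] <;>
      by_cases hl : l = i <;> simp [hl]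

lemma eMap_apply_inl (u : (Fin 2 × V) →₀ ℕ) (k : Fin 2)
    (c : (delV H T).ConnectedComponent) :
    eMap H T u (Sum.inl (k, c)) =
      ∑ i ∈ Finset.univ.filter (fun i => (delV H T).connectedComponentMk i = c), u (k, i) := by
  induction u using Finsupp.induction_linear with
  | zero => simp [eMap]
  | add f g hf hg => simp [eMap_add, hf, hg]; rw [← Finset.sum_add_distrib]
  | single p n =>
    obtain ⟨k', l⟩ := p
    rw [eMap_single]
    by_cases hkl : k' = k ∧ (delV H T).connectedComponentMk l = c
    · obtain ⟨rfl, hc⟩ := hkl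
      rw [Finset.sum_eq_single l]
      · simp [wFn, Finsupp.single_apply, hc, Prod.ext_iff]
      · intro b _ hb
        simp [Finsupp.single_apply, Prod.ext_iff, hb.symm]
      · intro hl
        simp only [Finset.mem_filter, Finset.mem_univ, true_and] at hl
        exact absurd hc hl
    · rw [Finset.sum_eq_zero]
      · have h1 : (Sum.inl (k', (delV H T).connectedComponentMk l) :
            (Fin 2 × (delV H T).ConnectedComponent) ⊕ V) ≠ Sum.inl (k, c) := by
          simp only [ne_eq, Sum.inl.injEq, Prod.mk.injEq, not_and]
          intro h1 h2
          exact hkl ⟨h1, h2⟩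
        simp [wFn, Finsupp.single_apply, h1]
      · intro b hb
        simp only [Finset.mem_filter, Finset.mem_univ, true_and] at hb
        rw [Finsupp.single_apply, if_neg]
        rintro ⟨rfl, rfl⟩
        exact hkl ⟨rfl, hb⟩

end PrimePT
section PrimePT2

variable (K : Type*) [Field K] {V : Type*} [Fintype V] [DecidableEq V]
variable (H : SimpleGraph V) (T : Finset V)

attribute [local instance] Classical.propDecidable

lemma psiHom_X (p : Fin 2 × V) :
    psiHom K H T (X p) = if p.2 ∈ T then 0 else
      X (Sum.inl (p.1, (delV H T).connectedComponentMk p.2)) * X (Sum.inr p.2) := by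
  simp [psiHom]

lemma psiHom_X_offT {p : Fin 2 × V} (hp : p.2 ∉ T) :
    psiHom K H T (X p) = monomial (wFn H T p) 1 := by
  rw [psiHom_X, if_neg hp, wFn, X, X, monomial_mul, mul_one]

lemma psi_monomial {u : (Fin 2 × V) →₀ ℕ} (hu : OffT T u) :
    psiHom K H T (monomial u (1 : K)) = monomial (eMap H T u) 1 := by
  induction u using Finsupp.induction with
  | zero => simp [eMap]
  | single_add p n f hpf hn ih =>
    have hp : p.2 ∉ T := by
      apply hu
      rw [Finsupp.mem_support_iff, Finsupp.add_apply, Finsupp.single_eq_same,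
        Finsupp.notMem_support_iff.1 hpf]
      simpa using hn
    have hf : OffT T f := by
      intro q hq
      apply hu
      rw [Finsupp.mem_support_iff, Finsupp.add_apply]
      have := Finsupp.mem_support_iff.1 hq
      intro h
      rcases Nat.eq_zero_of_add_eq_zero_left h with h'
      exact this h'
    have key : (monomial (Finsupp.single p n + f) (1 : K)) =
        monomial (Finsupp.single p n) 1 * monomial f 1 := by
      rw [monomial_mul, one_mul]
    rw [key, map_mul, ih hf, ← X_pow_eq_monomial, map_pow, psiHom_X_offT K H T hp,
      monomial_pow, one_pow, monomial_mul, one_mul, eMap_add, eMap_single]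

/-- distance used in the straightening induction -/
noncomputable def Dm (u u' : (Fin 2 × V) →₀ ℕ) : ℕ :=
  ∑ i : V, ((u (0, i) - u' (0, i)) + (u' (0, i) - u (0, i)))

lemma offT_of_apply_ne {u : (Fin 2 × V) →₀ ℕ} (hu : OffT T u) {p : Fin 2 × V}
    (h : u p ≠ 0) : p.2 ∉ T := hu p (Finsupp.mem_support_iff.2 h)

/-- The elementary swap step in the straightening argument. -/
lemma swap_step {u u' : (Fin 2 × V) →₀ ℕ} (hu : OffT T u) (hu' : OffT T u')
    (he : eMap H T u = eMap H T u') {i : V} (hi : u' (0, i) < u (0, i)) :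
    ∃ u₂, OffT T u₂ ∧ eMap H T u₂ = eMap H T u ∧ Dm u₂ u' + 2 ≤ Dm u u' ∧
      monomial u (1 : K) - monomial u₂ 1 ∈ PTIdeal K H T := by
  have hA : ∀ l, u (0, l) + u (1, l) = u' (0, l) + u' (1, l) := fun l => by
    have := congrFun (congrArg (↑·) he) (Sum.inr l)
    simpa [eMap_apply_inr] using this
  have hB : ∑ l ∈ Finset.univ.filter
        (fun l => (delV H T).connectedComponentMk l = (delV H T).connectedComponentMk i),
        u (0, l) =
      ∑ l ∈ Finset.univ.filter
        (fun l => (delV H T).connectedComponentMk l = (delV H T).connectedComponentMk i),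
        u' (0, l) := by
    have := congrFun (congrArg (↑·) he) (Sum.inl (0, (delV H T).connectedComponentMk i))
    simpa [eMap_apply_inl] using this
  -- find j in the same component with u (0,j) < u' (0,j)
  have hj : ∃ j, (delV H T).connectedComponentMk j = (delV H T).connectedComponentMk i ∧
      u (0, j) < u' (0, j) := by
    by_contra hc
    push_neg at hc
    have hlt : ∑ l ∈ Finset.univ.filter
        (fun l => (delV H T).connectedComponentMk l = (delV H T).connectedComponentMk i),
        u' (0, l) <
        ∑ l ∈ Finset.univ.filter
        (fun l => (delV H T).connectedComponentMk l = (delV H T).connectedComponentMk i),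
        u (0, l) := by
      apply Finset.sum_lt_sum
      · intro l hl
        simp only [Finset.mem_filter, Finset.mem_univ, true_and] at hl
        exact hc l hl
      · exact ⟨i, Finset.mem_filter.2 ⟨Finset.mem_univ _, rfl⟩, hi⟩
    omega
  obtain ⟨j, hcj, hj⟩ := hj
  have hij : i ≠ j := fun h => by rw [h] at hi; omega
  have hui : 1 ≤ u (0, i) := by omega
  have huj : 1 ≤ u (1, j) := by have := hA j; omega
  have hiT : i ∉ T := offT_of_apply_ne T hu (p := (0, i)) (by omega)
  have hjT : j ∉ T := offT_of_apply_ne T hu (p := (1, j)) (by omega)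
  have hreach : (delV H T).Reachable i j :=
    (SimpleGraph.ConnectedComponent.exact hcj).symm
  set s : (Fin 2 × V) →₀ ℕ := Finsupp.single (0, i) 1 + Finsupp.single (1, j) 1 with hs
  have hsle : s ≤ u := by
    rw [Finsupp.le_iff]
    intro p hp
    rw [hs]
    by_cases h1 : p = ((0 : Fin 2), i)
    · subst h1
      simp [Finsupp.single_apply, Prod.ext_iff, hij, hui]
    · by_cases h2 : p = ((1 : Fin 2), j)
      · subst h2
        simp [Finsupp.single_apply, Prod.ext_iff, hij, huj, Fin.ext_iff]
      · have h1' : ((0 : Fin 2), i) ≠ p := fun h => h1 h.symm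
        have h2' : ((1 : Fin 2), j) ≠ p := fun h => h2 h.symm
        simp [Finsupp.single_apply, h1', h2']
  set m0 := u - s with hm0
  have hm : m0 + s = u := tsub_add_cancel_of_le hsle
  set u2 := m0 + (Finsupp.single ((0 : Fin 2), j) 1 + Finsupp.single ((1 : Fin 2), i) 1)
    with hu2
  have hsingle_vals : ∀ p : Fin 2 × V, u2 p =
      (u p - s p) + ((if ((0 : Fin 2), j) = p then 1 else 0) +
        (if ((1 : Fin 2), i) = p then 1 else 0)) := by
    intro p
    rw [hu2, Finsupp.add_apply, Finsupp.add_apply, hm0, Finsupp.tsub_apply,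
      Finsupp.single_apply, Finsupp.single_apply]
  have hs_vals : ∀ p : Fin 2 × V, s p =
      ((if ((0 : Fin 2), i) = p then 1 else 0) + (if ((1 : Fin 2), j) = p then 1 else 0)) := by
    intro p
    rw [hs, Finsupp.add_apply, Finsupp.single_apply, Finsupp.single_apply]
  have hvi : u2 ((0 : Fin 2), i) = u ((0 : Fin 2), i) - 1 := by
    rw [hsingle_vals, hs_vals]
    have h1 : (((0 : Fin 2), j) : Fin 2 × V) ≠ ((0 : Fin 2), i) := by
      simp [Prod.ext_iff]; exact fun h => hij h.symm
    have h2 : (((1 : Fin 2), i) : Fin 2 × V) ≠ ((0 : Fin 2), i) := by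
      simp [Prod.ext_iff, Fin.ext_iff]
    have h3 : (((1 : Fin 2), j) : Fin 2 × V) ≠ ((0 : Fin 2), i) := by
      simp [Prod.ext_iff, Fin.ext_iff]
    rw [if_neg h1, if_neg h2, if_pos rfl, if_neg h3]
    omega
  have hvj : u2 ((0 : Fin 2), j) = u ((0 : Fin 2), j) + 1 := by
    rw [hsingle_vals, hs_vals]
    have h1 : (((0 : Fin 2), i) : Fin 2 × V) ≠ ((0 : Fin 2), j) := by
      simp [Prod.ext_iff]; exact hij
    have h2 : (((1 : Fin 2), j) : Fin 2 × V) ≠ ((0 : Fin 2), j) := by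
      simp [Prod.ext_iff, Fin.ext_iff]
    have h3 : (((1 : Fin 2), i) : Fin 2 × V) ≠ ((0 : Fin 2), j) := by
      simp [Prod.ext_iff, Fin.ext_iff]
    rw [if_neg h1, if_neg h2, if_pos rfl, if_neg h3]
    omega
  have hvo : ∀ l : V, l ≠ i → l ≠ j → u2 ((0 : Fin 2), l) = u ((0 : Fin 2), l) := by
    intro l hli hlj
    rw [hsingle_vals, hs_vals]
    have h1 : (((0 : Fin 2), i) : Fin 2 × V) ≠ ((0 : Fin 2), l) := by
      simp [Prod.ext_iff]; exact fun h => hli h.symm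
    have h2 : (((1 : Fin 2), j) : Fin 2 × V) ≠ ((0 : Fin 2), l) := by
      simp [Prod.ext_iff, Fin.ext_iff]
    have h3 : (((0 : Fin 2), j) : Fin 2 × V) ≠ ((0 : Fin 2), l) := by
      simp [Prod.ext_iff]; exact fun h => hlj h.symm
    have h4 : (((1 : Fin 2), i) : Fin 2 × V) ≠ ((0 : Fin 2), l) := by
      simp [Prod.ext_iff, Fin.ext_iff]
    rw [if_neg h1, if_neg h2, if_neg h3, if_neg h4]
    omega
  refine ⟨u2, ?_, ?_, ?_, ?_⟩
  · -- OffT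
    intro p hp
    have hne := Finsupp.mem_support_iff.1 hp
    by_cases h1 : p = ((0 : Fin 2), j)
    · subst h1; exact hjT
    · by_cases h2 : p = ((1 : Fin 2), i)
      · subst h2; exact hiT
      · have h1' : (((0 : Fin 2), j) : Fin 2 × V) ≠ p := fun h => h1 h.symm
        have h2' : (((1 : Fin 2), i) : Fin 2 × V) ≠ p := fun h => h2 h.symm
        rw [hsingle_vals, if_neg h1', if_neg h2'] at hne
        have : u p ≠ 0 := by omega
        exact offT_of_apply_ne T hu this
  · -- eMap
    rw [hu2, eMap_add, eMap_add, eMap_single, eMap_single, ← hm, eMap_add, hs, eMap_add,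
      eMap_single, eMap_single, one_smul, one_smul, one_smul, one_smul]
    congr 1
    simp only [wFn, hcj]
    abel
  · -- distance
    have hji : j ≠ i := fun h => hij h.symm
    set F : V → ℕ := fun l => (u ((0:Fin 2), l) - u' ((0:Fin 2), l)) +
      (u' ((0:Fin 2), l) - u ((0:Fin 2), l)) with hF
    set Gf : V → ℕ := fun l => (u2 ((0:Fin 2), l) - u' ((0:Fin 2), l)) +
      (u' ((0:Fin 2), l) - u2 ((0:Fin 2), l)) with hG
    have hjmem : j ∈ Finset.univ.erase i := Finset.mem_erase.2 ⟨hji, Finset.mem_univ j⟩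
    have eF : ∑ l : V, F l = F i + (F j + ∑ l ∈ (Finset.univ.erase i).erase j, F l) := by
      rw [Finset.add_sum_erase _ F hjmem, Finset.add_sum_erase _ F (Finset.mem_univ i)]
    have eG : ∑ l : V, Gf l = Gf i + (Gf j + ∑ l ∈ (Finset.univ.erase i).erase j, Gf l) := by
      rw [Finset.add_sum_erase _ Gf hjmem, Finset.add_sum_erase _ Gf (Finset.mem_univ i)]
    have hcongr : ∑ l ∈ (Finset.univ.erase i).erase j, Gf l =
        ∑ l ∈ (Finset.univ.erase i).erase j, F l := by
      apply Finset.sum_congr rfl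
      intro l hl
      have hl' := Finset.mem_erase.1 hl
      have hl'' := Finset.mem_erase.1 hl'.2
      rw [hG, hF]
      simp only
      rw [hvo l hl''.1 hl'.1]
    show ∑ l : V, Gf l + 2 ≤ ∑ l : V, F l
    rw [eF, eG, hcongr]
    have hGi : Gf i + 1 ≤ F i := by
      rw [hG, hF]; simp only; rw [hvi]; omega
    have hGj : Gf j + 1 ≤ F j := by
      rw [hG, hF]; simp only; rw [hvj]; omega
    omega
  · -- membership
    have hX : ∀ a b : Fin 2 × V, (X a * X b : MvPolynomial (Fin 2 × V) K) =
        monomial (Finsupp.single a 1 + Finsupp.single b 1) 1 := by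
      intro a b
      rw [← pow_one (X a), ← pow_one (X b), X_pow_eq_monomial, X_pow_eq_monomial,
        monomial_mul, one_mul]
    have hb : binom K i j = X ((0 : Fin 2), i) * X ((1 : Fin 2), j) -
        X ((0 : Fin 2), j) * X ((1 : Fin 2), i) := rfl
    have hkey : monomial u (1 : K) - monomial u2 1 = monomial m0 1 * binom K i j := by
      rw [hb, hX, hX, mul_sub, monomial_mul, monomial_mul, one_mul, ← hm, hs, hu2]
    rw [hkey]
    apply Ideal.mul_mem_left
    exact Ideal.subset_span (Set.mem_union_right _ ⟨i, j, hiT, hjT, hij, hreach, rfl⟩)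

end PrimePT2
section PrimePT3

variable (K : Type*) [Field K] {V : Type*} [Fintype V] [DecidableEq V]
variable (H : SimpleGraph V) (T : Finset V)

attribute [local instance] Classical.propDecidable

lemma Dm_comm (u u' : (Fin 2 × V) →₀ ℕ) : Dm u u' = Dm u' u := by
  unfold Dm
  apply Finset.sum_congr rfl
  intro l _
  omega

lemma eq_of_eMap_eq {u u' : (Fin 2 × V) →₀ ℕ} (he : eMap H T u = eMap H T u')
    (h0 : ∀ l, u (0, l) = u' (0, l)) : u = u' := by
  have hA : ∀ l, u (0, l) + u (1, l) = u' (0, l) + u' (1, l) := fun l => by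
    have := congrFun (congrArg (↑·) he) (Sum.inr l)
    simpa [eMap_apply_inr] using this
  ext p
  obtain ⟨k, l⟩ := p
  fin_cases k
  · exact h0 l
  · show u ((1 : Fin 2), l) = u' ((1 : Fin 2), l)
    have := hA l
    have := h0 l
    omega

lemma straighten (d : ℕ) : ∀ u u' : (Fin 2 × V) →₀ ℕ, Dm u u' ≤ d → OffT T u → OffT T u' →
    eMap H T u = eMap H T u' →
    monomial u (1 : K) - monomial u' 1 ∈ PTIdeal K H T := by
  induction d with
  | zero =>
    intro u u' hD hu hu' he
    have h0 : ∀ l, u (0, l) = u' (0, l) := by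
      intro l
      have hz : Dm u u' = 0 := Nat.le_zero.1 hD
      unfold Dm at hz
      rw [Finset.sum_eq_zero_iff] at hz
      have := hz l (Finset.mem_univ l)
      omega
    rw [eq_of_eMap_eq H T he h0, sub_self]
    exact zero_mem _
  | succ d ih =>
    intro u u' hD hu hu' he
    by_cases heq : u = u'
    · rw [heq, sub_self]; exact zero_mem _
    · have hx : ∃ i, u (0, i) ≠ u' (0, i) := by
        by_contra hc
        push_neg at hc
        exact heq (eq_of_eMap_eq H T he hc)
      obtain ⟨i, hne⟩ := hx
      rcases Nat.lt_or_ge (u' (0, i)) (u (0, i)) with hlt | hge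
      · obtain ⟨u₂, h1, h2, h3, h4⟩ := swap_step K H T hu hu' he hlt
        have h5 : monomial u₂ (1 : K) - monomial u' 1 ∈ PTIdeal K H T :=
          ih u₂ u' (by omega) h1 hu' (h2.trans he)
        have := add_mem h4 h5
        rwa [sub_add_sub_cancel] at this
      · have hlt' : u (0, i) < u' (0, i) := by omega
        obtain ⟨u₂, h1, h2, h3, h4⟩ := swap_step K H T hu' hu he.symm hlt'
        have hD2 : Dm u u₂ ≤ d := by
          have e1 : Dm u u₂ = Dm u₂ u := Dm_comm u u₂
          have e2 : Dm u' u = Dm u u' := Dm_comm u' u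
          omega
        have h5 : monomial u (1 : K) - monomial u₂ 1 ∈ PTIdeal K H T :=
          ih u u₂ hD2 hu h1 (he.trans h2.symm)
        have := sub_mem h5 h4
        rwa [sub_sub_sub_cancel_right] at this
      
/-- Choice of a representative monomial for an exponent vector in the target. -/
noncomputable def hFun (E : ((Fin 2 × (delV H T).ConnectedComponent) ⊕ V) →₀ ℕ) :
    MvPolynomial (Fin 2 × V) K ⧸ PTIdeal K H T :=
  if hE : ∃ u : (Fin 2 × V) →₀ ℕ, OffT T u ∧ eMap H T u = E then
    Ideal.Quotient.mk _ (monomial hE.choose 1) else 0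

lemma hFun_spec {u : (Fin 2 × V) →₀ ℕ} (hu : OffT T u) :
    hFun K H T (eMap H T u) = Ideal.Quotient.mk _ (monomial u 1) := by
  have hE : ∃ u' : (Fin 2 × V) →₀ ℕ, OffT T u' ∧ eMap H T u' = eMap H T u := ⟨u, hu, rfl⟩
  rw [hFun, dif_pos hE, Ideal.Quotient.eq]
  obtain ⟨h1, h2⟩ := hE.choose_spec
  exact straighten K H T (Dm hE.choose u) _ _ le_rfl h1 hu h2

/-- The linear section sending a target monomial to the class of a representative. -/
noncomputable def sigmaL :
    MvPolynomial ((Fin 2 × (delV H T).ConnectedComponent) ⊕ V) K →ₗ[K]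
      (MvPolynomial (Fin 2 × V) K ⧸ PTIdeal K H T) :=
  (Finsupp.lsum K fun E => LinearMap.toSpanSingleton K _ (hFun K H T E)) ∘ₗ
    (AddMonoidAlgebra.coeffLinearEquiv K).toLinearMap

lemma sigmaL_monomial (E : ((Fin 2 × (delV H T).ConnectedComponent) ⊕ V) →₀ ℕ) (a : K) :
    sigmaL K H T (monomial E a) = a • hFun K H T E := by
  rw [← single_eq_monomial]
  have h := Finsupp.lsum_single K
    (fun E => LinearMap.toSpanSingleton K
      (MvPolynomial (Fin 2 × V) K ⧸ PTIdeal K H T) (hFun K H T E)) E a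
  rw [LinearMap.toSpanSingleton_apply] at h
  exact h

lemma psiHom_C (a : K) : psiHom K H T (C a) = C a := by
  simp [psiHom]

set_option synthInstance.maxHeartbeats 1000000 in
lemma mk_eq_sigma (f : MvPolynomial (Fin 2 × V) K) :
    Ideal.Quotient.mk (PTIdeal K H T) f = sigmaL K H T (psiHom K H T f) := by
  have hsmul : ∀ (a : K) (x : MvPolynomial (Fin 2 × V) K),
      a • Ideal.Quotient.mk (PTIdeal K H T) x = Ideal.Quotient.mk (PTIdeal K H T) (C a * x) :=
    fun a x => by
      rw [← MvPolynomial.smul_eq_C_mul, ← Ideal.Quotient.mkₐ_eq_mk K, ← map_smul]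
  induction f using MvPolynomial.induction_on' with
  | add p q hp hq =>
    rw [map_add, hp, hq, ← map_add (sigmaL K H T), ← map_add (psiHom K H T)]
  | monomial u a =>
    by_cases hA : OffT T u
    · have hm : (monomial u a : MvPolynomial (Fin 2 × V) K) = C a * monomial u 1 := by
        rw [C_mul_monomial, mul_one]
      have h1 : psiHom K H T (C a * monomial u 1) = monomial (eMap H T u) a := by
        rw [map_mul, psiHom_C, psi_monomial K H T hA, C_mul_monomial, mul_one]
      rw [hm, h1, sigmaL_monomial, hFun_spec K H T hA, hsmul]
    · rw [OffT] at hA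
      push_neg at hA
      obtain ⟨p, hp, hpT⟩ := hA
      have hple : Finsupp.single p 1 ≤ u := by
        rw [Finsupp.single_le_iff]
        exact Nat.one_le_iff_ne_zero.2 (Finsupp.mem_support_iff.1 hp)
      have hu' : (monomial u a : MvPolynomial (Fin 2 × V) K) =
          X p * monomial (u - Finsupp.single p 1) a := by
        rw [← pow_one (X p), X_pow_eq_monomial, monomial_mul, one_mul,
          add_tsub_cancel_of_le hple]
      have hXp : (X p : MvPolynomial (Fin 2 × V) K) ∈ PTIdeal K H T := by
        obtain ⟨k, l⟩ := p
        fin_cases k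
        · exact Ideal.subset_span (Set.mem_union_left _ ⟨l, hpT, Or.inl rfl⟩)
        · exact Ideal.subset_span (Set.mem_union_left _ ⟨l, hpT, Or.inr rfl⟩)
      have hL : Ideal.Quotient.mk (PTIdeal K H T) (monomial u a) = 0 := by
        rw [Ideal.Quotient.eq_zero_iff_mem, hu']
        exact Ideal.mul_mem_right _ _ hXp
      have hR : psiHom K H T (monomial u a) = 0 := by
        rw [hu', map_mul, psiHom_X, if_pos hpT, zero_mul]
      rw [hL, hR, map_zero]

lemma PTIdeal_eq_ker : PTIdeal K H T = RingHom.ker (psiHom K H T) := by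
  apply le_antisymm
  · rw [PTIdeal, Ideal.span_le]
    rintro f (⟨i, hi, rfl | rfl⟩ | ⟨i, j, hiT, hjT, hij, hre, rfl⟩)
    · simp [RingHom.mem_ker, xv, psiHom, hi]
    · simp [RingHom.mem_ker, yv, psiHom, hi]
    · simp only [SetLike.mem_coe, RingHom.mem_ker]
      have hcc : (delV H T).connectedComponentMk i = (delV H T).connectedComponentMk j :=
        SimpleGraph.ConnectedComponent.sound hre
      simp only [binom, map_sub, map_mul, xv, yv, psiHom_X, if_neg hiT, if_neg hjT]
      rw [hcc]
      ring
  · intro f hf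
    rw [RingHom.mem_ker] at hf
    have h := mk_eq_sigma K H T f
    rw [hf, map_zero] at h
    exact Ideal.Quotient.eq_zero_iff_mem.1 h

lemma PTIdeal_isPrime : (PTIdeal K H T).IsPrime := by
  rw [PTIdeal_eq_ker]
  exact RingHom.ker_isPrime _

end PrimePT3
section Structure

variable (K : Type*) [Field K] {V : Type*} [Fintype V] [DecidableEq V]

lemma binom_mem_of_vars' {p : Ideal (MvPolynomial (Fin 2 × V) K)} {i j : V}
    (hx : xv K j ∈ p) (hy : yv K j ∈ p) : binom K i j ∈ p := by
  have h1 : xv K i * yv K j ∈ p := p.mul_mem_left _ hy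
  have h2 : xv K j * yv K i ∈ p := p.mul_mem_right _ hx
  exact sub_mem h1 h2

lemma PTIdeal_eq_IC (H : SimpleGraph V) (T : Finset V) :
    PTIdeal K H T = IC K (rg H T) T := by
  unfold PTIdeal IC
  congr 2
  ext f
  constructor
  · rintro ⟨i, j, hiT, hjT, hij, hre, rfl⟩
    exact ⟨i, j, ⟨hij, hiT, hjT, hre⟩, hiT, hjT, rfl⟩
  · rintro ⟨i, j, ⟨hij, hiT, hjT, hre⟩, _, _, rfl⟩
    exact ⟨i, j, hiT, hjT, hij, hre, rfl⟩

lemma beIdeal_eq_IC (G : SimpleGraph V) : beIdeal K G = IC K G ∅ := by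
  unfold beIdeal IC
  congr 1
  ext f
  simp only [Set.mem_union, Set.mem_setOf_eq]
  constructor
  · rintro ⟨i, j, h, rfl⟩
    exact Or.inr ⟨i, j, h, Finset.notMem_empty i, Finset.notMem_empty j, rfl⟩
  · rintro (⟨i, hi, _⟩ | ⟨i, j, h, _, _, rfl⟩)
    · exact absurd hi (Finset.notMem_empty i)
    · exact ⟨i, j, h, rfl⟩

lemma IC_add_IC (W₁ W₂ : SimpleGraph V) (S₁ S₂ : Finset V) :
    IC K W₁ S₁ + IC K W₂ S₂ = IC K (W₁ ⊔ W₂) (S₁ ∪ S₂) := by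
  rw [Submodule.add_eq_sup]
  apply le_antisymm
  · apply sup_le <;> apply Ideal.span_le.2 <;>
      rintro f (⟨i, hi, rfl | rfl⟩ | ⟨i, j, hadj, hi, hj, rfl⟩) <;> apply SetLike.mem_coe.2
    · exact xv_mem_IC K (Finset.mem_union_left _ hi)
    · exact yv_mem_IC K (Finset.mem_union_left _ hi)
    · by_cases hi2 : i ∈ S₂
      · exact binom_mem_of_vars K (xv_mem_IC K (Finset.mem_union_right _ hi2))
          (yv_mem_IC K (Finset.mem_union_right _ hi2))
      · by_cases hj2 : j ∈ S₂
        · exact binom_mem_of_vars' K (xv_mem_IC K (Finset.mem_union_right _ hj2))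
            (yv_mem_IC K (Finset.mem_union_right _ hj2))
        · exact binom_mem_IC K (Or.inl hadj) (by simp [hi, hi2]) (by simp [hj, hj2])
    · exact xv_mem_IC K (Finset.mem_union_right _ hi)
    · exact yv_mem_IC K (Finset.mem_union_right _ hi)
    · by_cases hi1 : i ∈ S₁
      · exact binom_mem_of_vars K (xv_mem_IC K (Finset.mem_union_left _ hi1))
          (yv_mem_IC K (Finset.mem_union_left _ hi1))
      · by_cases hj1 : j ∈ S₁
        · exact binom_mem_of_vars' K (xv_mem_IC K (Finset.mem_union_left _ hj1))
            (yv_mem_IC K (Finset.mem_union_left _ hj1))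
        · exact binom_mem_IC K (Or.inr hadj) (by simp [hi, hi1]) (by simp [hj, hj1])
  · apply Ideal.span_le.2
    rintro f (⟨i, hi, rfl | rfl⟩ | ⟨i, j, hadj, hi, hj, rfl⟩) <;> apply SetLike.mem_coe.2
    · rcases Finset.mem_union.1 hi with h | h
      · exact Submodule.mem_sup_left (xv_mem_IC K h)
      · exact Submodule.mem_sup_right (xv_mem_IC K h)
    · rcases Finset.mem_union.1 hi with h | h
      · exact Submodule.mem_sup_left (yv_mem_IC K h)
      · exact Submodule.mem_sup_right (yv_mem_IC K h)
    · rcases hadj with h | h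
      · exact Submodule.mem_sup_left (binom_mem_IC K h
          (fun h' => hi (Finset.mem_union_left _ h')) (fun h' => hj (Finset.mem_union_left _ h')))
      · exact Submodule.mem_sup_right (binom_mem_IC K h
          (fun h' => hi (Finset.mem_union_right _ h')) (fun h' => hj (Finset.mem_union_right _ h')))

lemma reachable_G_of_reach_delV {G W : SimpleGraph V} {S : Finset V}
    (hGW : ∀ i j, W.Adj i j → G.Reachable i j) {i j : V}
    (h : (delV W S).Reachable i j) : i = j ∨ G.Reachable i j := by
  obtain ⟨w⟩ := h
  induction w with
  | nil => exact Or.inl rfl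
  | @cons a b c hadj w ih =>
    right
    have h1 : G.Reachable a b := hGW _ _ hadj.1
    rcases ih with rfl | h2
    · exact h1
    · exact h1.trans h2

lemma minimalPrime_IC {G W : SimpleGraph V} {S : Finset V}
    (hGW : ∀ i j, W.Adj i j → G.Reachable i j)
    {p : Ideal (MvPolynomial (Fin 2 × V) K)} (hp : p ∈ (IC K W S).minimalPrimes) :
    ∃ W' S', (∀ i j, W'.Adj i j → G.Reachable i j) ∧ p = IC K W' S' := by
  classical
  obtain ⟨⟨hprime, hle⟩, hmin⟩ := hp
  set S' : Finset V := S ∪ Finset.univ.filter (fun i => xv K i ∈ p ∧ yv K i ∈ p) with hS'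
  have hSS' : S ⊆ S' := Finset.subset_union_left
  have hvarsS' : ∀ i ∈ S', xv K i ∈ p ∧ yv K i ∈ p := by
    intro i hi
    rcases Finset.mem_union.1 hi with h | h
    · exact ⟨hle (xv_mem_IC K h), hle (yv_mem_IC K h)⟩
    · exact (Finset.mem_filter.1 h).2
  have hnotS' : ∀ k, k ∉ S' → (xv K k ∉ p ∨ yv K k ∉ p) := by
    intro k hk
    by_contra hc
    push_neg at hc
    exact hk (Finset.mem_union_right _
      (Finset.mem_filter.2 ⟨Finset.mem_univ _, hc.1, hc.2⟩))
  have h1 : IC K W S ≤ PTIdeal K W S' := by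
    rw [PTIdeal_eq_IC]
    apply Ideal.span_le.2
    rintro f (⟨i, hi, rfl | rfl⟩ | ⟨i, j, hadj, hi, hj, rfl⟩) <;> apply SetLike.mem_coe.2
    · exact xv_mem_IC K (hSS' hi)
    · exact yv_mem_IC K (hSS' hi)
    · by_cases hi' : i ∈ S'
      · exact binom_mem_of_vars K (xv_mem_IC K hi') (yv_mem_IC K hi')
      · by_cases hj' : j ∈ S'
        · exact binom_mem_of_vars' K (xv_mem_IC K hj') (yv_mem_IC K hj')
        · exact binom_mem_IC K
            ⟨hadj.ne, hi', hj', SimpleGraph.Adj.reachable ⟨hadj, hi', hj'⟩⟩ hi' hj'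
  have h2 : PTIdeal K W S' ≤ p := by
    apply Ideal.span_le.2
    rintro f (⟨i, hi, rfl | rfl⟩ | ⟨i, j, hiS, hjS, hij, hre, rfl⟩) <;> apply SetLike.mem_coe.2
    · exact (hvarsS' i hi).1
    · exact (hvarsS' i hi).2
    · apply walk_binom_mem K hprime (delV W S')
      · intro a b hab
        exact hle (binom_mem_IC K hab.1 (fun h => hab.2.1 (hSS' h))
          (fun h => hab.2.2 (hSS' h)))
      · intro l k hlk
        exact hnotS' k hlk.2.2
      · exact hre
  have hpeq : p = PTIdeal K W S' :=
    le_antisymm (hmin ⟨PTIdeal_isPrime K W S', h1⟩ h2) h2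
  refine ⟨rg W S', S', ?_, by rw [hpeq, PTIdeal_eq_IC]⟩
  intro i j hadj
  rcases reachable_G_of_reach_delV hGW hadj.2.2.2 with rfl | h
  · exact absurd rfl hadj.1
  · exact h

lemma inv_sum {G : SimpleGraph V} :
    ∀ (F : Finset (Ideal (MvPolynomial (Fin 2 × V) K))) (hne : F.Nonempty),
    (∀ I ∈ F, ∃ W S, (∀ i j, W.Adj i j → G.Reachable i j) ∧ I = IC K W S) →
    ∃ W S, (∀ i j, W.Adj i j → G.Reachable i j) ∧ F.sum id = IC K W S := by
  intro F hne
  induction hne using Finset.Nonempty.cons_induction with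
  | singleton a =>
    intro h
    obtain ⟨W, S, hW, hI⟩ := h a (Finset.mem_singleton_self a)
    exact ⟨W, S, hW, by simpa using hI⟩
  | cons a s ha hs ih =>
    intro h
    obtain ⟨W, S, hW, hI⟩ := h a (Finset.mem_cons_self a s)
    obtain ⟨W2, S2, hW2, hI2⟩ := ih (fun I hI => h I (Finset.mem_cons_of_mem hI))
    refine ⟨W ⊔ W2, S ∪ S2, ?_, ?_⟩
    · rintro i j (hadj | hadj)
      exacts [hW _ _ hadj, hW2 _ _ hadj]
    · rw [Finset.sum_cons, id_eq, hI, hI2, IC_add_IC]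

lemma qreach_inv {G : SimpleGraph V} {I : Ideal (MvPolynomial (Fin 2 × V) K)}
    (h : QReach K G I) :
    ∃ W S, (∀ i j, W.Adj i j → G.Reachable i j) ∧ I = IC K W S := by
  have hdel : ∀ {i j : V}, (delV G ∅).Reachable i j → G.Reachable i j := by
    intro i j h
    refine h.mono ?_
    intro a b hab
    exact hab.1
  induction h with
  | base I hI =>
    obtain ⟨F, hne, hsub, rfl⟩ := hI
    apply inv_sum K F hne
    intro p hp
    have hp' : p ∈ (beIdeal K G).minimalPrimes := hsub hp
    rw [beIdeal_eq_IC] at hp'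
    exact minimalPrime_IC K (fun i j h => h.reachable) hp'
  | step I J hI hnp hJ ihI =>
    obtain ⟨W, S, hW, rfl⟩ := ihI
    obtain ⟨F, hne, hsub, rfl⟩ := hJ
    apply inv_sum K F hne
    intro p hp
    rcases hsub hp with hmem | ⟨p', hp', rfl⟩
    · exact minimalPrime_IC K hW hmem
    · obtain ⟨W1, S1, hW1, hp1⟩ := minimalPrime_IC K hW hp'
      refine ⟨W1 ⊔ rg G ∅, S1 ∪ ∅, ?_, ?_⟩
      · rintro i j (hadj | hadj)
        · exact hW1 _ _ hadj
        · exact hdel hadj.2.2.2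
      · rw [hp1, PTIdeal_eq_IC K G ∅]
        show IC K W1 S1 + IC K (rg G ∅) ∅ = _
        rw [IC_add_IC]

lemma IC_eq_IC_rg {G X : SimpleGraph V} (S : Finset V)
    (hGX : ∀ i j, X.Adj i j → G.Reachable i j)
    (hXG : ∀ i j, i ≠ j → G.Reachable i j → X.Adj i j) :
    IC K X S = IC K (rg X S) S := by
  apply le_antisymm <;> apply Ideal.span_le.2 <;>
    rintro f (⟨i, hi, rfl | rfl⟩ | ⟨i, j, hadj, hi, hj, rfl⟩) <;> apply SetLike.mem_coe.2
  · exact xv_mem_IC K hi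
  · exact yv_mem_IC K hi
  · exact binom_mem_IC K ⟨hadj.ne, hi, hj, SimpleGraph.Adj.reachable ⟨hadj, hi, hj⟩⟩ hi hj
  · exact xv_mem_IC K hi
  · exact yv_mem_IC K hi
  · obtain ⟨hij, _, _, hre⟩ := hadj
    rcases reachable_G_of_reach_delV hGX hre with rfl | h
    · exact absurd rfl hij
    · exact binom_mem_IC K (hXG i j hij h) hi hj

lemma inv_add_P0 {G W : SimpleGraph V} {S : Finset V}
    (hW : ∀ i j, W.Adj i j → G.Reachable i j) :
    IC K W S + PTIdeal K G ∅ = PTIdeal K (W ⊔ rg G ∅) S := by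
  have hdel : ∀ {i j : V}, (delV G ∅).Reachable i j → G.Reachable i j := by
    intro i j h
    refine h.mono ?_
    intro a b hab
    exact hab.1
  have hdel' : ∀ {i j : V}, G.Reachable i j → (delV G ∅).Reachable i j := by
    intro i j h
    refine h.mono ?_
    intro a b hab
    exact ⟨hab, Finset.notMem_empty a, Finset.notMem_empty b⟩
  rw [PTIdeal_eq_IC K G ∅, IC_add_IC, Finset.union_empty, PTIdeal_eq_IC K _ S]
  apply IC_eq_IC_rg K S
  · rintro i j (hadj | hadj)
    · exact hW _ _ hadj
    · exact hdel hadj.2.2.2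
  · intro i j hij hre
    exact Or.inr ⟨hij, Finset.notMem_empty i, Finset.notMem_empty j, hdel' hre⟩

lemma P0_mem_minimalPrimes (G : SimpleGraph V) :
    PTIdeal K G ∅ ∈ (beIdeal K G).minimalPrimes := by
  constructor
  · refine ⟨PTIdeal_isPrime K G ∅, ?_⟩
    rw [beIdeal, Ideal.span_le]
    rintro f ⟨i, j, hadj, rfl⟩
    apply SetLike.mem_coe.2
    apply Ideal.subset_span
    exact Set.mem_union_right _ ⟨i, j, Finset.notMem_empty i, Finset.notMem_empty j, hadj.ne,
      SimpleGraph.Adj.reachable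
        ⟨hadj, Finset.notMem_empty i, Finset.notMem_empty j⟩, rfl⟩
  · rintro q ⟨hqprime, hqle⟩ hqp
    apply Ideal.span_le.2
    rintro f (⟨i, hi, _⟩ | ⟨i, j, hi0, hj0, hij, hre, rfl⟩)
    · exact absurd hi (Finset.notMem_empty i)
    · apply SetLike.mem_coe.2
      apply walk_binom_mem K hqprime (delV G ∅)
      · intro a b hab
        exact hqle (Ideal.subset_span ⟨a, b, hab.1, rfl⟩)
      · intro l k hlk
        left
        intro hxk
        have hxk' := hqp hxk
        rw [PTIdeal_eq_IC] at hxk'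
        exact xv_not_mem_IC K (Finset.notMem_empty k) hxk'
      · exact hre

lemma idealSum_eq_sup (F : Finset (Ideal (MvPolynomial (Fin 2 × V) K))) :
    F.sum id = F.sup id := by
  induction F using Finset.cons_induction with
  | empty => simp [Ideal.zero_eq_bot]
  | cons a s ha ih => rw [Finset.sum_cons, Finset.sup_cons, ih, Submodule.add_eq_sup, id_eq]

lemma sup_add_const (c : Ideal (MvPolynomial (Fin 2 × V) K)) :
    ∀ (F : Finset (Ideal (MvPolynomial (Fin 2 × V) K))), F.Nonempty →
    F.sup (fun I => I + c) = F.sum id + c := by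
  intro F hne
  induction hne using Finset.Nonempty.cons_induction with
  | singleton a => simp
  | cons a s ha hs ih =>
    rw [Finset.sup_cons, Finset.sum_cons, ih, id_eq, Submodule.add_eq_sup,
      Submodule.add_eq_sup, Submodule.add_eq_sup, sup_sup_sup_comm, sup_idem,
      Submodule.add_eq_sup, sup_assoc]

lemma qreach_add {G : SimpleGraph V} {q : Ideal (MvPolynomial (Fin 2 × V) K)}
    (h : QReach K G q) : QReach K G (q + PTIdeal K G ∅) := by
  classical
  have hmin := P0_mem_minimalPrimes K G
  have hPP : PTIdeal K G ∅ + PTIdeal K G ∅ = PTIdeal K G ∅ := by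
    rw [Submodule.add_eq_sup, sup_idem]
  cases h with
  | base I hI =>
    obtain ⟨F, hne, hsub, rfl⟩ := hI
    by_cases hPF : PTIdeal K G ∅ ∈ F
    · have hle : PTIdeal K G ∅ ≤ F.sum id := by
        rw [idealSum_eq_sup]
        exact Finset.le_sup (f := id) hPF
      rw [Submodule.add_eq_sup, sup_eq_left.2 hle]
      exact QReach.base _ ⟨F, hne, hsub, rfl⟩
    · refine QReach.base _ ⟨insert (PTIdeal K G ∅) F, Finset.insert_nonempty _ _, ?_, ?_⟩
      · rw [Finset.coe_insert]
        exact Set.insert_subset hmin hsub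
      · rw [Finset.sum_insert hPF, add_comm, id_eq]
  | step I J hI hnp hJ =>
    obtain ⟨F, hne, hsub, rfl⟩ := hJ
    refine QReach.step I _ hI hnp ⟨F.image (· + PTIdeal K G ∅), hne.image _, ?_, ?_⟩
    · rintro p hp
      rw [Finset.coe_image] at hp
      obtain ⟨p₀, hp₀, rfl⟩ := hp
      rcases hsub hp₀ with hm | ⟨p₁, hp₁, rfl⟩
      · exact Or.inr ⟨p₀, hm, rfl⟩
      · refine Or.inr ⟨p₁, hp₁, ?_⟩
        show p₁ + PTIdeal K G ∅ = p₁ + PTIdeal K G ∅ + PTIdeal K G ∅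
        rw [add_assoc, hPP]
    · rw [idealSum_eq_sup K (F.image (fun I => I + PTIdeal K G ∅)), Finset.sup_image]
      have h' : (id ∘ fun I => I + PTIdeal K G ∅) = (fun I => I + PTIdeal K G ∅) := rfl
      rw [h', sup_add_const K (PTIdeal K G ∅) F hne]

lemma IC_eq_vars {W : SimpleGraph V} {S : Finset V} (h : ∀ i j : V, i ∉ S → j ∉ S → i = j) :
    IC K W S = Ideal.span { f | ∃ i ∈ S, f = xv K i ∨ f = yv K i } := by
  apply le_antisymm
  · apply Ideal.span_le.2
    rintro f (hf | ⟨i, j, hadj, hi, hj, rfl⟩)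
    · exact SetLike.mem_coe.2 (Ideal.subset_span hf)
    · exact absurd (h i j hi hj) hadj.ne
  · apply Ideal.span_le.2
    intro f hf
    exact SetLike.mem_coe.2 (Ideal.subset_span (Set.mem_union_left _ hf))

end Structure
/-- Let `n ≥ 2`, `T = [n] \ {v}`, and suppose `q̂ = P_T(H) ∈ Q_G`. Then
the open interval `(q̂, 1_{Q_G}) = {q ∈ Q_G : q ⊊ q̂}` is meet-contractible with witness
`P_∅(G)`: `P_∅(G)` lies in the interval, and for every `q` in the interval, `q + P_∅(G)`
lies in the interval and is the meet of `q` and `P_∅(G)` there (with respect to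
reverse inclusion). -/
theorem interval_meetContractible (K : Type*) [Field K] (n : ℕ) (hn : 2 ≤ n)
    (G H : SimpleGraph (Fin n)) (v : Fin n) (T : Finset (Fin n))
    (hT : T = Finset.univ.erase v) (hq : PTIdeal K H T ∈ QG K G) :
    PTIdeal K G ∅ ∈ QG K G ∧ PTIdeal K G ∅ < PTIdeal K H T ∧
      ∀ q ∈ QG K G, q < PTIdeal K H T →
        (q + PTIdeal K G ∅ ∈ QG K G ∧ q + PTIdeal K G ∅ < PTIdeal K H T ∧
          q ≤ q + PTIdeal K G ∅ ∧ PTIdeal K G ∅ ≤ q + PTIdeal K G ∅ ∧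
          ∀ z ∈ QG K G, z < PTIdeal K H T → q ≤ z → PTIdeal K G ∅ ≤ z →
            q + PTIdeal K G ∅ ≤ z) := by
  have hP0prime : (PTIdeal K G ∅).IsPrime := PTIdeal_isPrime K G ∅
  have hP0min := P0_mem_minimalPrimes K G
  have hP0Q : PTIdeal K G ∅ ∈ QG K G := by
    refine ⟨QReach.base _ ⟨{PTIdeal K G ∅}, Finset.singleton_nonempty _, ?_, ?_⟩, hP0prime⟩
    · simpa using hP0min
    · simp
  have hoffT : ∀ i j : Fin n, i ∉ T → j ∉ T → i = j := by
    subst hT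
    intro i j hi hj
    simp only [Finset.mem_erase, Finset.mem_univ, and_true, not_not] at hi hj
    rw [hi, hj]
  have hqhat : PTIdeal K H T = Ideal.span { f | ∃ i ∈ T, f = xv K i ∨ f = yv K i } := by
    rw [PTIdeal_eq_IC]
    exact IC_eq_vars K hoffT
  have hxvmemhat : ∀ i ∈ T, xv K i ∈ PTIdeal K H T := by
    intro i hi
    rw [PTIdeal_eq_IC]
    exact xv_mem_IC K hi
  have hyvmemhat : ∀ i ∈ T, yv K i ∈ PTIdeal K H T := by
    intro i hi
    rw [PTIdeal_eq_IC]
    exact yv_mem_IC K hi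
  have hP0le : PTIdeal K G ∅ ≤ PTIdeal K H T := by
    apply Ideal.span_le.2
    rintro f (⟨i, hi, _⟩ | ⟨i, j, hi0, hj0, hij, hre, rfl⟩)
    · exact absurd hi (Finset.notMem_empty i)
    · apply SetLike.mem_coe.2
      by_cases hiT : i ∈ T
      · exact binom_mem_of_vars K (hxvmemhat i hiT) (hyvmemhat i hiT)
      · have hjT : j ∈ T := by
          by_contra hjT
          exact hij (hoffT i j hiT hjT)
        exact binom_mem_of_vars' K (hxvmemhat j hjT) (hyvmemhat j hjT)
  haveI : Nontrivial (Fin n) := ⟨⟨⟨0, by omega⟩, ⟨1, by omega⟩, by simp [Fin.ext_iff]⟩⟩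
  have hP0lt : PTIdeal K G ∅ < PTIdeal K H T := by
    obtain ⟨w, hwv⟩ := exists_ne v
    have hwT : w ∈ T := by
      subst hT
      exact Finset.mem_erase.2 ⟨hwv, Finset.mem_univ w⟩
    apply lt_of_le_of_ne hP0le
    intro he
    have hmem : xv K w ∈ PTIdeal K G ∅ := he ▸ hxvmemhat w hwT
    rw [PTIdeal_eq_IC] at hmem
    exact xv_not_mem_IC K (Finset.notMem_empty w) hmem
  refine ⟨hP0Q, hP0lt, ?_⟩
  intro q hqmem hqlt
  obtain ⟨hqre, hqprime⟩ := hqmem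
  obtain ⟨W, S, hW, rfl⟩ := qreach_inv K hqre
  have hsum_eq : IC K W S + PTIdeal K G ∅ = PTIdeal K (W ⊔ rg G ∅) S := inv_add_P0 K hW
  have hprime2 : (IC K W S + PTIdeal K G ∅).IsPrime := by
    rw [hsum_eq]
    exact PTIdeal_isPrime K _ S
  have hre2 : QReach K G (IC K W S + PTIdeal K G ∅) := qreach_add K hqre
  have hSsubT : S ⊆ T := by
    intro i hi
    have hmem : xv K i ∈ PTIdeal K H T := hqlt.le (xv_mem_IC K hi)
    rw [PTIdeal_eq_IC] at hmem
    by_contra hiT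
    exact xv_not_mem_IC K hiT hmem
  have hSneT : S ≠ T := by
    rintro rfl
    apply hqlt.ne
    rw [IC_eq_vars K hoffT, hqhat]
  obtain ⟨w, hwT, hwS⟩ : ∃ w, w ∈ T ∧ w ∉ S := by
    by_contra hc
    push_neg at hc
    exact hSneT (Finset.Subset.antisymm hSsubT hc)
  have hlt2 : IC K W S + PTIdeal K G ∅ < PTIdeal K H T := by
    apply lt_of_le_of_ne
    · rw [Submodule.add_eq_sup]
      exact sup_le hqlt.le hP0le
    · intro he
      have hmem : xv K w ∈ IC K W S + PTIdeal K G ∅ := he ▸ hxvmemhat w hwT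
      rw [hsum_eq, PTIdeal_eq_IC] at hmem
      exact xv_not_mem_IC K hwS hmem
  refine ⟨⟨hre2, hprime2⟩, hlt2, ?_, ?_, ?_⟩
  · rw [Submodule.add_eq_sup]
    exact le_sup_left
  · rw [Submodule.add_eq_sup]
    exact le_sup_right
  · intro z _ _ h1 h2
    rw [Submodule.add_eq_sup]
    exact sup_le h1 h2
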